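/- arXiv:2603.08714 — 2 statements merged into one kernel-verified Lean document; each statement's English description precedes it below -/
import Mathlib

section
/- (Pattern integrality) Suppose for each arc a, pattern variables u_a^s ≥ 0 over all subsets s ⊆ K satisfy Σ_s u_a^s = 1 and, for each commodity k routed through arc a (an indicator t_a^k ∈ {0,1}), the constraint t_a^k ≤ Σ_{s ∋ k} u_a^s. If the cost Σ_s r_a(Σ_{k∈s} b_k)·u_a^s is minimized with r_a strictly increasing and b_k > 0, then the unique optimal choice is u_a^ŝ = 1 for ŝ = {k : t_a^k = 1} and u_a^s = 0 otherwise. -/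
open Finset

/-- Pattern integrality: with pattern variables `u s ≥ 0` over subsets `s ⊆ K`
summing to one, covering constraints `t k → 1 ≤ Σ_{s ∋ k} u s` for routed
commodities, and a strictly increasing arc cost `r`, any minimizer of
`Σ_s r(Σ_{k ∈ s} b k) * u s` puts weight 1 on the pattern
`ŝ = {k : t k}` and 0 elsewhere. -/
theorem pattern_integrality
    (K : Type*) [Fintype K] [DecidableEq K]
    (b : K → ℝ) (hb : ∀ k, 0 < b k)
    (r : ℝ → ℝ) (hr : StrictMono r)
    (t : K → Prop) [DecidablePred t]
    (u : Finset K → ℝ) (hu : ∀ s, 0 ≤ u s)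
    (husum : ∑ s : Finset K, u s = 1)
    (hcover : ∀ k, t k → 1 ≤ ∑ s ∈ Finset.univ.filter (fun s : Finset K => k ∈ s), u s)
    (hopt : ∀ u' : Finset K → ℝ, (∀ s, 0 ≤ u' s) → (∑ s : Finset K, u' s = 1) →
      (∀ k, t k → 1 ≤ ∑ s ∈ Finset.univ.filter (fun s : Finset K => k ∈ s), u' s) →
      ∑ s : Finset K, r (∑ k ∈ s, b k) * u s ≤ ∑ s : Finset K, r (∑ k ∈ s, b k) * u' s) :
    u (Finset.univ.filter t) = 1 ∧
      ∀ s : Finset K, s ≠ Finset.univ.filter t → u s = 0 := by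
  classical
  set S := Finset.univ.filter t with hS
  -- Any s not containing S has u s = 0
  have hzero : ∀ s : Finset K, ¬ S ⊆ s → u s = 0 := by
    intro s hns
    obtain ⟨k, hkS, hks⟩ := Finset.not_subset.mp hns
    have htk : t k := (Finset.mem_filter.mp hkS).2
    have hsplit : ∑ x ∈ Finset.univ.filter (fun x : Finset K => k ∈ x), u x
        + ∑ x ∈ Finset.univ.filter (fun x : Finset K => ¬ k ∈ x), u x = 1 := by
      rw [Finset.sum_filter_add_sum_filter_not]; exact husum
    have h1 := hcover k htk
    have h2 : ∑ x ∈ Finset.univ.filter (fun x : Finset K => ¬ k ∈ x), u x ≤ 0 := by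
      linarith
    have h3 : ∑ x ∈ Finset.univ.filter (fun x : Finset K => ¬ k ∈ x), u x = 0 :=
      le_antisymm h2 (Finset.sum_nonneg fun x _ => hu x)
    have := (Finset.sum_eq_zero_iff_of_nonneg (fun x _ => hu x)).mp h3
    exact this s (by simp [hks])
  -- the indicator of S is feasible
  set u' : Finset K → ℝ := fun s => if s = S then 1 else 0 with hu'
  have hu'nn : ∀ s, 0 ≤ u' s := by intro s; simp only [hu']; split <;> norm_num
  have hu'sum : ∑ s : Finset K, u' s = 1 := by
    simp [hu', Finset.sum_ite_eq']
  have hu'cov : ∀ k, t k → 1 ≤ ∑ s ∈ Finset.univ.filter (fun s : Finset K => k ∈ s), u' s := by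
    intro k htk
    have hkS : k ∈ S := by simp [hS, htk]
    have : ∑ s ∈ Finset.univ.filter (fun s : Finset K => k ∈ s), u' s = 1 := by
      rw [hu', Finset.sum_ite_eq']
      simp [hkS]
    linarith
  have hcost' : ∑ s : Finset K, r (∑ k ∈ s, b k) * u' s = r (∑ k ∈ S, b k) := by
    simp only [hu', mul_ite, mul_one, mul_zero]
    rw [Finset.sum_ite_eq']
    simp
  have hkey : ∑ s : Finset K, r (∑ k ∈ s, b k) * u s ≤ r (∑ k ∈ S, b k) := by
    have := hopt u' hu'nn hu'sum hu'cov
    rwa [hcost'] at this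
  -- pointwise lower bound
  have hpt : ∀ s : Finset K, r (∑ k ∈ S, b k) * u s ≤ r (∑ k ∈ s, b k) * u s := by
    intro s
    by_cases hsub : S ⊆ s
    · have hle : (∑ k ∈ S, b k) ≤ ∑ k ∈ s, b k :=
        Finset.sum_le_sum_of_subset_of_nonneg hsub (fun k _ _ => (hb k).le)
      exact mul_le_mul_of_nonneg_right (hr.monotone hle) (hu s)
    · rw [hzero s hsub, mul_zero, mul_zero]
  have hzero2 : ∀ s : Finset K, s ≠ S → u s = 0 := by
    intro s hsne
    by_contra h
    have hpos : 0 < u s := lt_of_le_of_ne (hu s) (Ne.symm h)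
    have hsub : S ⊆ s := by
      by_contra hns
      exact h (hzero s hns)
    have hssub : S ⊂ s := ssubset_of_ne_of_subset (Ne.symm hsne) hsub
    obtain ⟨k, hks, hkS⟩ := Finset.exists_of_ssubset hssub
    have hlt : (∑ k ∈ S, b k) < ∑ k ∈ s, b k :=
      Finset.sum_lt_sum_of_subset hsub hks hkS (hb k) (fun j _ _ => (hb j).le)
    have hstrict : r (∑ k ∈ S, b k) * u s < r (∑ k ∈ s, b k) * u s :=
      mul_lt_mul_of_pos_right (hr hlt) hpos
    have hsum_lt : ∑ x : Finset K, r (∑ k ∈ S, b k) * u x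
        < ∑ x : Finset K, r (∑ k ∈ x, b k) * u x :=
      Finset.sum_lt_sum (fun x _ => hpt x) ⟨s, Finset.mem_univ s, hstrict⟩
    have hls : ∑ x : Finset K, r (∑ k ∈ S, b k) * u x = r (∑ k ∈ S, b k) := by
      rw [← Finset.mul_sum, husum, mul_one]
    rw [hls] at hsum_lt
    linarith
  refine ⟨?_, hzero2⟩
  have : ∑ s : Finset K, u s = u S :=
    Finset.sum_eq_single S (fun x _ hx => hzero2 x hx) (by simp)
  rw [this] at husum
  exact husum
end

section
/- (Validity of the tightened constraint for unsplittable solutions) Suppose x_k^p ∈ {0,1}, z_a^i ∈ {0,1} with Σ_i z_a^i = 1, the arc load satisfies Σ_k Σ_{p∋a} b_k·x_k^p ≤ Σ_i z_a^i·c_a^i, and each commodity crossing arc a has b_k ≤ the unique selected vertex value c_a^{i*}. Then for every threshold f ≥ 0: Σ_{k : b_k ≥ f} Σ_{p∋a} b_k·x_k^p ≤ Σ_{i : c_a^i ≥ f} z_a^i·c_a^i. -/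
open Finset

/-- Validity of the tightened constraints for unsplittable solutions: with binary
path variables, a single selected vertex `i*` (binary `z` summing to one), total
arc load at most `cv i*`, and every crossing commodity of bandwidth at most
`cv i*`, the threshold constraint holds for every threshold `f ≥ 0`. -/
theorem tight_inner_valid_for_unsplittable
    (K : Type*) [Fintype K] (P : K → Type*) [∀ k, Fintype (P k)]
    (N : Type*) [Fintype N]
    (b : K → ℝ) (hb : ∀ k, 0 < b k)
    (x : ∀ k, P k → ℝ) (hxbin : ∀ k p, x k p = 0 ∨ x k p = 1)
    (crosses : ∀ k, P k → Prop) [∀ k, DecidablePred (crosses k)]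
    (cv : N → ℝ) (hcv : ∀ i, 0 ≤ cv i)
    (z : N → ℝ) (hzbin : ∀ i, z i = 0 ∨ z i = 1) (hzsum : ∑ i, z i = 1)
    (istar : N) (histar : z istar = 1)
    (hload : ∑ k : K, ∑ p ∈ Finset.univ.filter (crosses k), b k * x k p ≤ cv istar)
    (hcross : ∀ k : K, (∃ p, crosses k p ∧ x k p = 1) → b k ≤ cv istar) :
    ∀ f : ℝ, 0 ≤ f →
      ∑ k ∈ Finset.univ.filter (fun k => f ≤ b k),
          ∑ p ∈ Finset.univ.filter (crosses k), b k * x k p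
        ≤ ∑ i ∈ Finset.univ.filter (fun i => f ≤ cv i), z i * cv i := by
  intro f hf
  have hRHSnonneg : (0:ℝ) ≤ ∑ i ∈ Finset.univ.filter (fun i => f ≤ cv i), z i * cv i := by
    apply Finset.sum_nonneg
    intro i _
    rcases hzbin i with h | h <;> simp [h, hcv i]
  by_cases hfc : f ≤ cv istar
  · -- RHS ≥ cv istar ≥ LHS
    have hmem : istar ∈ Finset.univ.filter (fun i => f ≤ cv i) := by
      simp [hfc]
    have hRHS : cv istar ≤ ∑ i ∈ Finset.univ.filter (fun i => f ≤ cv i), z i * cv i := by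
      have := Finset.single_le_sum (f := fun i => z i * cv i)
        (fun i _ => by rcases hzbin i with h | h <;> simp [h, hcv i]) hmem
      simpa [histar] using this
    refine le_trans (le_trans ?_ hload) hRHS
    apply Finset.sum_le_sum_of_subset_of_nonneg (Finset.filter_subset _ _)
    intro k _ _
    apply Finset.sum_nonneg
    intro p _
    rcases hxbin k p with h | h <;> simp [h, (hb k).le]
  · -- LHS is zero
    have hLHS : ∑ k ∈ Finset.univ.filter (fun k => f ≤ b k),
        ∑ p ∈ Finset.univ.filter (crosses k), b k * x k p = 0 := by
      apply Finset.sum_eq_zero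
      intro k hk
      simp only [Finset.mem_filter] at hk
      apply Finset.sum_eq_zero
      intro p hp
      simp only [Finset.mem_filter] at hp
      rcases hxbin k p with h | h
      · simp [h]
      · exfalso
        have := hcross k ⟨p, hp.2, h⟩
        exact hfc (le_trans hk.2 this)
    rw [hLHS]; exact hRHSnonneg
end
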